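/- Let g be a short sl₂-Lie superalgebra with M = {α ∈ g : hα = α} and triple product (m,n,r) := −[[m, f n], r]. Then for all homogeneous m, n, r, s ∈ M: (m,n,r)⋆s + (−1)^{|r|(|m|+|n|)} r⋆(m,n,s) = (−1)^{|n|(|r|+|s|)} m⋆((r⋆s)•n), where x⋆y = [x,y] and a•n = [a, f n]. -/

import Mathlib

/-- The Koszul sign `(-1)^{ij}` for parities `i j : ZMod 2`. -/
noncomputable def sg (i j : ZMod 2) : ℂ := (-1 : ℂ) ^ (i.val * j.val)

/-- A short `sl₂`-Lie superalgebra: a Z/2-graded complex Lie superalgebra `(G, B)`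
together with operators `E F H` satisfying the `sl₂` relations, acting by even
derivations, such that `G` is spanned by `H`-eigenvectors with eigenvalues in
`{-2,-1,0,1,2}` (which, over `ℂ`, is exactly the condition that `G` decomposes as an
`sl₂`-module into copies of the adjoint, the natural and the trivial representations,
i.e. `G ≅ sl₂⊗J ⊕ V⊗M ⊕ D`). -/
structure ShortSL2 {G : Type} [AddCommGroup G] [Module ℂ G]
    (gr : ZMod 2 → Submodule ℂ G)
    (B : G →ₗ[ℂ] G →ₗ[ℂ] G)
    (E F H : G →ₗ[ℂ] G) : Prop where
  bracket_grade : ∀ i j : ZMod 2, ∀ a ∈ gr i, ∀ b ∈ gr j, B a b ∈ gr (i + j)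
  antisymm : ∀ i j : ZMod 2, ∀ a ∈ gr i, ∀ b ∈ gr j, B a b = -(sg i j • B b a)
  jacobi : ∀ i j : ZMod 2, ∀ a ∈ gr i, ∀ b ∈ gr j, ∀ c : G,
      B a (B b c) = B (B a b) c + sg i j • B b (B a c)
  grade_spans : ∀ x : G, ∃ x0 x1 : G, x0 ∈ gr 0 ∧ x1 ∈ gr 1 ∧ x = x0 + x1
  rel_HE : H ∘ₗ E - E ∘ₗ H = 2 • E
  rel_HF : H ∘ₗ F - F ∘ₗ H = -(2 • F)
  rel_EF : E ∘ₗ F - F ∘ₗ E = H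
  derE : ∀ x y : G, E (B x y) = B (E x) y + B x (E y)
  derF : ∀ x y : G, F (B x y) = B (F x) y + B x (F y)
  derH : ∀ x y : G, H (B x y) = B (H x) y + B x (H y)
  evenE : ∀ i : ZMod 2, ∀ x ∈ gr i, E x ∈ gr i
  evenF : ∀ i : ZMod 2, ∀ x ∈ gr i, F x ∈ gr i
  evenH : ∀ i : ZMod 2, ∀ x ∈ gr i, H x ∈ gr i
  short : ∀ x : G, ∃ x2 x1 x0 y1 y2 : G,
      H x2 = (2 : ℂ) • x2 ∧ H x1 = x1 ∧ H x0 = 0 ∧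
      H y1 = (-1 : ℂ) • y1 ∧ H y2 = (-2 : ℂ) • y2 ∧ x = x2 + x1 + x0 + y1 + y2

/-- The triple product `(m,n,r) := −[[m, f n], r]` on `M = {m : H m = m}`. -/
noncomputable def trip {G : Type} [AddCommGroup G] [Module ℂ G]
    (B : G →ₗ[ℂ] G →ₗ[ℂ] G) (F : G →ₗ[ℂ] G) (m n r : G) : G :=
  -(B (B m (F n)) r)

/-!
Since `h` acts by even derivations, `[m, [r, s]]` is an `h`-eigenvector of eigenvalue `3`; in a
short `sl₂`-Lie superalgebra `g` is the sum of the `h`-eigenspaces for `±2, ±1, 0`, which are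
independent of the eigenspace for `3`, so it vanishes.
With `a = [m, f n]`, the super Jacobi identity turns the left-hand side into `-[a, [r, s]]`, and
Jacobi for `m, f n, [r, s]` together with `[m, [r, s]] = 0` gives `[a, [r, s]] = [m, [f n, [r, s]]]`;
antisymmetry of `[f n, [r, s]]` finishes the computation.
-/

theorem sg_comm (i j : ZMod 2) : sg i j = sg j i := by
  rw [sg, sg, Nat.mul_comm]

namespace ShortSL2

variable {G : Type} [AddCommGroup G] [Module ℂ G] {gr : ZMod 2 → Submodule ℂ G}
  {B : G →ₗ[ℂ] G →ₗ[ℂ] G} {E F H : G →ₗ[ℂ] G}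

theorem mem_iSup_eigenspace (h : ShortSL2 gr B E F H) (x : G) :
    x ∈ ⨆ μ ∈ ({2, 1, 0, -1, -2} : Set ℂ), Module.End.eigenspace H μ := by
  have mem : ∀ {μ : ℂ} {y : G}, H y = μ • y → μ ∈ ({2, 1, 0, -1, -2} : Set ℂ) →
      y ∈ ⨆ μ ∈ ({2, 1, 0, -1, -2} : Set ℂ), Module.End.eigenspace H μ := fun hy hμ =>
    Submodule.mem_iSup_of_mem _ (Submodule.mem_iSup_of_mem hμ (Module.End.mem_eigenspace_iff.2 hy))
  obtain ⟨x2, x1, x0, y1, y2, h2, h1, h0, hm1, hm2, rfl⟩ := h.short x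
  have h1' : H x1 = (1 : ℂ) • x1 := by rw [one_smul, h1]
  have h0' : H x0 = (0 : ℂ) • x0 := by rw [zero_smul, h0]
  refine add_mem (add_mem (add_mem (add_mem (mem h2 ?_) (mem h1' ?_)) (mem h0' ?_))
    (mem hm1 ?_)) (mem hm2 ?_) <;> simp

theorem eq_zero_of_apply_eq_smul (h : ShortSL2 gr B E F H) {μ : ℂ}
    (hμ : μ ∉ ({2, 1, 0, -1, -2} : Set ℂ)) {x : G} (hx : H x = μ • x) : x = 0 :=
  Submodule.disjoint_def.1 ((Module.End.eigenspaces_iSupIndep H).disjoint_biSup hμ) x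
    (Module.End.mem_eigenspace_iff.2 hx) (h.mem_iSup_eigenspace x)

theorem apply_bracket_eq_smul (h : ShortSL2 gr B E F H) {a b : ℂ} {x y : G}
    (hx : H x = a • x) (hy : H y = b • y) : H (B x y) = (a + b) • B x y := by
  rw [h.derH, hx, hy, map_smul, map_smul, LinearMap.smul_apply, add_smul]

theorem bracket_bracket_eq_zero (h : ShortSL2 gr B E F H) {m r s : G}
    (hm : H m = m) (hr : H r = r) (hs : H s = s) : B m (B r s) = 0 := by
  have eig_one : ∀ {x : G}, H x = x → H x = (1 : ℂ) • x := fun hx => by rw [one_smul, hx]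
  refine h.eq_zero_of_apply_eq_smul (μ := 3) (by norm_num) ?_
  have := h.apply_bracket_eq_smul (eig_one hm)
    (h.apply_bracket_eq_smul (eig_one hr) (eig_one hs))
  rwa [show (1 + (1 + 1) : ℂ) = 3 by norm_num] at this

theorem bracket_bracket_of_bracket_eq_zero (h : ShortSL2 gr B E F H) {i j : ZMod 2}
    {m x u : G} (hm : m ∈ gr i) (hx : x ∈ gr j) (hmu : B m u = 0) :
    B (B m x) u = B m (B x u) := by
  rw [h.jacobi i j m hm x hx u, hmu, map_zero, smul_zero, add_zero]

end ShortSL2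

/-- In a short `sl₂`-Lie superalgebra,
`(m,n,r)⋆s + (−1)^{|r|(|m|+|n|)} r⋆(m,n,s) = (−1)^{|n|(|r|+|s|)} m⋆((r⋆s)•n)`,
with `x⋆y = [x,y]` and `a•n = [a, f n]`. -/
theorem shortSL2_trip_SJT5
    {G : Type} [AddCommGroup G] [Module ℂ G]
    (gr : ZMod 2 → Submodule ℂ G)
    (B : G →ₗ[ℂ] G →ₗ[ℂ] G) (E F H : G →ₗ[ℂ] G)
    (h : ShortSL2 gr B E F H) :
    ∀ pm pn pr ps : ZMod 2, ∀ m ∈ gr pm, ∀ n ∈ gr pn, ∀ r ∈ gr pr, ∀ s ∈ gr ps,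
      H m = m → H n = n → H r = r → H s = s →
      B (trip B F m n r) s + sg pr (pm + pn) • B r (trip B F m n s)
        = sg pn (pr + ps) • B m (B (B r s) (F n)) := by
  intro pm pn pr ps m hm n hn r hr s hs Hm _ Hr Hs
  have hFn : F n ∈ gr pn := h.evenF pn n hn
  have ha : B m (F n) ∈ gr (pm + pn) := h.bracket_grade pm pn m hm (F n) hFn
  have jacobi_rs := h.jacobi (pm + pn) pr (B m (F n)) ha r hr s
  have bracket_rs : B (B m (F n)) (B r s) = -(sg pn (pr + ps) • B m (B (B r s) (F n))) := by
    rw [h.bracket_bracket_of_bracket_eq_zero hm hFn (h.bracket_bracket_eq_zero Hm Hr Hs),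
      h.antisymm pn (pr + ps) (F n) hFn (B r s) (h.bracket_grade pr ps r hr s hs),
      map_neg, map_smul]
  simp only [trip, map_neg, LinearMap.neg_apply, sg_comm pr]
  linear_combination (norm := module) jacobi_rs - bracket_rs
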